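/- If κ is an uncountable regular cardinal, then there exists a family of sets S(X) ⊆ κ indexed by subsets X ⊆ κ such that for any two distinct X, Y ⊆ κ, the symmetric difference S(X) Δ S(Y) is a stationary subset of κ. -/

import Mathlib

/-!
Solovay's argument, run on the ordinals `α < κ` of countable cofinality. Fix for each such `α`
an `ω`-sequence `ladder α` cofinal in `α`. Some coordinate `n` of these ladders is unbounded on
a stationary set, in the sense that `{α | β ≤ ladder α n}` is stationary for every `β < κ`:
otherwise clubs witnessing the failure for each `n` would meet in an ordinal whose ladder cannot
reach the supremum of the bounds. The map `α ↦ ladder α n` is regressive, so by Fodor's lemma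
each set `{α | β ≤ ladder α n}` contains a stationary fibre, with value at least `β`. So the
values with a stationary fibre are unbounded in `κ`, hence `κ` many by regularity, and their
fibres are `κ` pairwise disjoint stationary sets `Z γ`; then `S X = ⋃ γ ∈ X, Z γ` works.
-/

open Cardinal Set

/-- `C` is a club (closed unbounded) subset of the ordinal `γ`: it consists of ordinals
below `γ`, its supremum is `γ`, and it is closed under suprema of its nonempty subsets
whose supremum is below `γ`. -/
def IsClubIn (γ : Ordinal) (C : Set Ordinal) : Prop :=
  C ⊆ Set.Iio γ ∧ sSup C = γ ∧
    ∀ s ⊆ C, s.Nonempty → sSup s < γ → sSup s ∈ C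

/-- `S` is stationary in `γ`: it meets every club in `γ`. -/
def IsStatIn (γ : Ordinal) (S : Set Ordinal) : Prop :=
  ∀ C : Set Ordinal, IsClubIn γ C → (S ∩ C).Nonempty

open Order Function
open scoped Ordinal

universe u

variable {o α : Ordinal.{u}} {C : Set Ordinal.{u}}

theorem sSup_eq_of_forall_lt_exists_gt {A : Set Ordinal} (hA : A ⊆ Iio o)
    (h : ∀ β < o, ∃ a ∈ A, β < a) : sSup A = o := by
  refine le_antisymm (csSup_le' fun a ha => (hA ha).le) (le_of_forall_lt fun β hβ => ?_)
  obtain ⟨a, haA, hβa⟩ := h β hβ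
  exact hβa.trans_le (le_csSup ⟨o, fun x hx => (hA hx).le⟩ haA)

theorem isClubIn_Iio (hlim : IsSuccLimit o) : IsClubIn o (Iio o) :=
  ⟨subset_rfl, sSup_eq_of_forall_lt_exists_gt subset_rfl
      fun β hβ => ⟨succ β, hlim.succ_lt hβ, lt_succ β⟩,
    fun _ _ _ hlt => hlt⟩

namespace IsClubIn

theorem exists_gt (hC : IsClubIn o C) {β : Ordinal} (hβ : β < o) : ∃ c ∈ C, β < c := by
  by_contra! hle
  rcases C.eq_empty_or_nonempty with rfl | hne
  · simp [← hC.2.1] at hβ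
  · exact ((csSup_le hne hle).trans_lt hβ).ne hC.2.1

theorem mem_of_forall_exists_mem_Ioo (hC : IsClubIn o C) (hα : α < o) (hα₀ : α ≠ 0)
    (h : ∀ δ < α, ∃ c ∈ C, δ < c ∧ c < α) : α ∈ C := by
  have hsup : sSup (C ∩ Iio α) = α :=
    sSup_eq_of_forall_lt_exists_gt inter_subset_right fun δ hδ =>
      let ⟨c, hc, hδc, hcα⟩ := h δ hδ
      ⟨c, ⟨hc, hcα⟩, hδc⟩
  obtain ⟨c, hc, -, hcα⟩ := h 0 (pos_iff_ne_zero.2 hα₀)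
  have hmem := hC.2.2 (C ∩ Iio α) inter_subset_left ⟨c, hc, hcα⟩ (by rwa [hsup])
  rwa [hsup] at hmem

end IsClubIn

theorem IsStatIn.mono {S T : Set Ordinal} (hS : IsStatIn o S) (hST : S ⊆ T) : IsStatIn o T :=
  fun C hC => (hS C hC).mono (inter_subset_inter_left C hST)

theorem isStatIn_symmDiff_biUnion {ι : Type*} {Z : ι → Set Ordinal} (hZ : ∀ i, IsStatIn o (Z i))
    (hdisj : Pairwise (Disjoint on Z)) {A B : Set ι} (hAB : A ≠ B) :
    IsStatIn o (symmDiff (⋃ i ∈ A, Z i) (⋃ i ∈ B, Z i)) := by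
  obtain ⟨i, hi⟩ := symmDiff_nonempty.2 hAB
  refine (hZ i).mono fun x hx => ?_
  have mem_iff : ∀ A : Set ι, x ∈ ⋃ j ∈ A, Z j ↔ i ∈ A := fun A => by
    refine ⟨fun h => ?_, fun h => mem_biUnion h hx⟩
    obtain ⟨j, hj, hxj⟩ := mem_iUnion₂.1 h
    by_contra hiA
    exact disjoint_left.1 (hdisj fun hij : i = j => hiA (hij ▸ hj)) hx hxj
  rw [mem_symmDiff, mem_iff, mem_iff]
  rwa [mem_symmDiff] at hi

noncomputable def nextIn (C : Set Ordinal) (β : Ordinal) : Ordinal :=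
  sInf {c ∈ C | β < c}

theorem IsClubIn.nextIn_mem (hC : IsClubIn o C) {β : Ordinal} (hβ : β < o) :
    nextIn C β ∈ C ∧ β < nextIn C β :=
  csInf_mem (hC.exists_gt hβ)

def diagInter (o : Ordinal) (D : Ordinal → Set Ordinal) : Set Ordinal :=
  {α | α < o ∧ ∀ γ < α, α ∈ D γ}

def IsLadder (α : Ordinal) (g : ℕ → Ordinal) : Prop :=
  (∀ n, g n < α) ∧ ∀ β < α, ∃ n, β ≤ g n

/-- The ordinals below `o` of cofinality at most `ω`; successor ordinals are included. -/
def ladderPoints (o : Ordinal) : Set Ordinal :=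
  {α | α < o ∧ ∃ g, IsLadder α g}

noncomputable def ladder (α : Ordinal) : ℕ → Ordinal :=
  Classical.epsilon (IsLadder α)

theorem isLadder_ladder (hα : α ∈ ladderPoints o) : IsLadder α (ladder α) :=
  Classical.epsilon_spec hα.2

section Regular

variable {κ : Cardinal.{u}} (hκ : κ.IsRegular)
include hκ

theorem iSup_Iio_lt_ord (ha : α < κ.ord) {f : Iio α → Ordinal.{u}} (hf : ∀ γ, f γ < κ.ord) :
    ⨆ γ, f γ < κ.ord :=
  Ordinal.lift_iSup_lt_of_lt_cof
    (by rw [← Ordinal.lift_cof, hκ.cof_ord, mk_Iio_ordinal, lift_lift, lift_lt]; exact lt_ord.1 ha)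
    hf

theorem lift_le_mk_of_forall_exists_le {s : Set Ordinal.{u}} (hs : s ⊆ Iio κ.ord)
    (h : ∀ β < κ.ord, ∃ γ ∈ s, β ≤ γ) : Cardinal.lift.{u + 1} κ ≤ #s := by
  by_contra! hlt
  have hsup : sSup s < κ.ord :=
    Ordinal.sSup_lt_of_lt_cof (by rwa [← Ordinal.lift_cof, hκ.cof_ord]) hs
  obtain ⟨γ, hγ, hle⟩ := h _ ((isSuccLimit_ord hκ.aleph0_le).succ_lt hsup)
  exact (lt_succ _).not_ge (hle.trans (le_csSup ⟨κ.ord, fun x hx => (hs hx).le⟩ hγ))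

variable (hunc : ℵ₀ < κ)
include hunc

theorem iSup_nat_lt_ord {f : ℕ → Ordinal.{u}} (hf : ∀ n, f n < κ.ord) : ⨆ n, f n < κ.ord :=
  Ordinal.lift_iSup_lt_of_lt_cof (by rw [← Ordinal.lift_cof, hκ.cof_ord]; simpa using hunc) hf

/-- `α` is the supremum of the iterates of `β` under `a ↦ sup_{γ < a} nextIn (D γ) a`; regularity
keeps each iterate below `κ`, and uncountable cofinality keeps their supremum below `κ`. -/
theorem exists_mem_ladderPoints_inter_diagInter {D : Ordinal → Set Ordinal}
    (hD : ∀ γ, IsClubIn κ.ord (D γ)) {β : Ordinal} (hβ : β < κ.ord) :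
    ∃ α ∈ ladderPoints κ.ord ∩ diagInter κ.ord D, β < α := by
  let step a := (⨆ γ : Iio a, nextIn (D γ) a) ⊔ succ a
  have lt_step a : a < step a := (lt_succ a).trans_le le_sup_right
  have step_lt a (ha : a < κ.ord) : step a < κ.ord :=
    max_lt (iSup_Iio_lt_ord hκ ha fun γ => (hD γ).1 ((hD γ).nextIn_mem ha).1)
      ((isSuccLimit_ord hκ.aleph0_le).succ_lt ha)
  have nextIn_le_step a γ (hγ : γ < a) : nextIn (D γ) a ≤ step a :=
    (le_ciSup (f := fun γ : Iio a => nextIn (D γ) a) Ordinal.bddAbove_of_small ⟨γ, hγ⟩).trans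
      le_sup_left
  let x k := step^[k] β
  have x_succ k : x (k + 1) = step (x k) := Function.iterate_succ_apply' step k β
  have x_lt k : x k < κ.ord := by
    induction k with
    | zero => exact hβ
    | succ k ih => exact x_succ k ▸ step_lt _ ih
  set α := ⨆ k, x k
  have x_lt_α k : x k < α :=
    (lt_step _).trans_le (x_succ k ▸ le_ciSup Ordinal.bddAbove_of_small (k + 1))
  have exists_gt δ (hδ : δ < α) : ∃ k, δ < x k := (lt_ciSup_iff Ordinal.bddAbove_of_small).1 hδ
  have hα : α < κ.ord := iSup_nat_lt_ord hκ hunc x_lt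
  refine ⟨α, ⟨⟨hα, x, x_lt_α, fun δ hδ => (exists_gt δ hδ).imp fun _ => le_of_lt⟩,
    hα, fun γ hγ => ?_⟩, x_lt_α 0⟩
  refine (hD γ).mem_of_forall_exists_mem_Ioo hα (x_lt_α 0).ne_bot fun δ hδ => ?_
  obtain ⟨k, hk⟩ := exists_gt _ (max_lt hδ hγ)
  obtain ⟨hmem, hgt⟩ := (hD γ).nextIn_mem (x_lt k)
  exact ⟨_, hmem, (le_max_left _ _).trans_lt (hk.trans hgt),
    (nextIn_le_step _ _ ((le_max_right _ _).trans_lt hk)).trans_lt (x_succ k ▸ x_lt_α (k + 1))⟩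

theorem isClubIn_diagInter {D : Ordinal → Set Ordinal} (hD : ∀ γ, IsClubIn κ.ord (D γ)) :
    IsClubIn κ.ord (diagInter κ.ord D) := by
  refine ⟨fun α hα => hα.1, sSup_eq_of_forall_lt_exists_gt (fun α hα => hα.1) fun β hβ => ?_,
    fun s hs hne hlt => ⟨hlt, fun γ hγ => ?_⟩⟩
  · obtain ⟨α, ⟨-, hα⟩, hβα⟩ := exists_mem_ladderPoints_inter_diagInter hκ hunc hD hβ
    exact ⟨α, hα, hβα⟩
  by_cases hmem : sSup s ∈ s
  · exact (hs hmem).2 γ hγ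
  refine (hD γ).mem_of_forall_exists_mem_Ioo hlt hγ.ne_bot fun δ hδ => ?_
  obtain ⟨y, hy, hlt_y⟩ := exists_lt_of_lt_csSup hne (max_lt hδ hγ)
  have hy_le : y ≤ sSup s := le_csSup ⟨κ.ord, fun z hz => (hs hz).1.le⟩ hy
  exact ⟨y, (hs hy).2 γ ((le_max_right _ _).trans_lt hlt_y), (le_max_left _ _).trans_lt hlt_y,
    hy_le.lt_of_ne fun h => hmem (h ▸ hy)⟩

theorem IsStatIn.exists_isStatIn_fiber {S : Set Ordinal} (hS : IsStatIn κ.ord S)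
    {F : Ordinal → Ordinal} (hF : ∀ α ∈ S, F α < α) :
    ∃ γ, IsStatIn κ.ord {α ∈ S | F α = γ} := by
  by_contra! h
  simp only [IsStatIn, not_forall, exists_prop] at h
  choose D hD hempty using h
  obtain ⟨α, hαS, -, hαD⟩ := hS _ (isClubIn_diagInter hκ hunc hD)
  exact hempty (F α) ⟨α, ⟨hαS, rfl⟩, hαD (F α) (hF α hαS)⟩

theorem exists_forall_isStatIn_le_ladder :
    ∃ n, ∀ β < κ.ord, IsStatIn κ.ord {α ∈ ladderPoints κ.ord | β ≤ ladder α n} := by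
  by_contra! h
  simp only [IsStatIn, not_forall, exists_prop] at h
  choose β hβ C hC hempty using h
  have hsup : (⨆ n, β n) ⊔ ω < κ.ord :=
    max_lt (iSup_nat_lt_ord hκ hunc hβ) (by simpa using ord_lt_ord.2 hunc)
  -- `D n = C n` for natural `n`, and `α > ω`, so `α` lies in every `C n`.
  obtain ⟨α, ⟨hT, -, hαC⟩, hα⟩ := exists_mem_ladderPoints_inter_diagInter hκ hunc
    (D := fun γ => C γ.card.toNat) (fun _ => hC _) hsup
  obtain ⟨n, hn⟩ := (isLadder_ladder hT).2 _ (le_sup_left.trans_lt hα)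
  have hαCn : α ∈ C n := by
    simpa using hαC n ((Ordinal.natCast_lt_omega0 n).trans_le le_sup_right |>.trans hα)
  exact hempty n ⟨α, ⟨hT, (le_ciSup Ordinal.bddAbove_of_small n).trans hn⟩, hαCn⟩

theorem exists_pairwise_disjoint_isStatIn :
    ∃ Z : Iio κ.ord → Set Ordinal,
      (∀ i, Z i ⊆ Iio κ.ord) ∧ (∀ i, IsStatIn κ.ord (Z i)) ∧ Pairwise (Disjoint on Z) := by
  obtain ⟨n, hn⟩ := exists_forall_isStatIn_le_ladder hκ hunc
  let fiber γ := {α ∈ ladderPoints κ.ord | ladder α n = γ}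
  let G := {γ | IsStatIn κ.ord (fiber γ)}
  have hG : G ⊆ Iio κ.ord := fun γ hγ => by
    obtain ⟨α, ⟨hT, rfl⟩, -⟩ := hγ _ (isClubIn_Iio (isSuccLimit_ord hκ.aleph0_le))
    exact ((isLadder_ladder hT).1 n).trans hT.1
  have hG_cofinal β (hβ : β < κ.ord) : ∃ γ ∈ G, β ≤ γ := by
    obtain ⟨γ, hγ⟩ := (hn β hβ).exists_isStatIn_fiber hκ hunc
      fun α hα => (isLadder_ladder hα.1).1 n
    obtain ⟨α, ⟨⟨-, hle⟩, rfl⟩, -⟩ := hγ _ (isClubIn_Iio (isSuccLimit_ord hκ.aleph0_le))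
    exact ⟨_, hγ.mono fun α' ⟨⟨hT, _⟩, h⟩ => ⟨hT, h⟩, hle⟩
  obtain ⟨e⟩ : Nonempty (Iio κ.ord ↪ G) := by
    rw [← Cardinal.le_def, mk_Iio_ordinal, card_ord]
    exact lift_le_mk_of_forall_exists_le hκ hG hG_cofinal
  refine ⟨fun i => fiber (e i), fun _ _ hα => hα.1.1, fun i => (e i).2, fun i j hij => ?_⟩
  exact disjoint_left.2 fun α hi hj => hij (e.injective (Subtype.ext (hi.2.symm.trans hj.2)))

end Regular

/-- For an uncountable regular cardinal `κ` there is a family `S X ⊆ κ` indexed by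
subsets `X ⊆ κ` such that the symmetric difference `S X ∆ S Y` is stationary in `κ`
whenever `X ≠ Y`. -/
theorem stmt1 (κ : Cardinal) (hreg : κ.IsRegular) (hunc : ℵ₀ < κ) :
    ∃ S : Set Ordinal → Set Ordinal,
      (∀ X, X ⊆ Set.Iio κ.ord → S X ⊆ Set.Iio κ.ord) ∧
      ∀ X Y, X ⊆ Set.Iio κ.ord → Y ⊆ Set.Iio κ.ord → X ≠ Y →
        IsStatIn κ.ord (symmDiff (S X) (S Y)) := by
  obtain ⟨Z, hZ_sub, hZ, hdisj⟩ := exists_pairwise_disjoint_isStatIn hreg hunc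
  refine ⟨fun X => ⋃ i ∈ Subtype.val ⁻¹' X, Z i, fun X _ => iUnion₂_subset fun i _ => hZ_sub i,
    fun X Y hX hY hXY => isStatIn_symmDiff_biUnion hZ hdisj ?_⟩
  rwa [Ne, Subtype.preimage_coe_eq_preimage_coe_iff, inter_eq_right.2 hX, inter_eq_right.2 hY]
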